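/- Representer property for the nuclear-norm SDP: in a finite-dimensional feature space ℝ^d, for any symmetric PSD matrix A feasible for the constraints φ_{x_i}⊤ A φ_{x_i} ≥ y_i², the projected matrix A' = P A P, where P is the orthogonal projection onto span{φ_{x_1},…,φ_{x_n}}, is also PSD, satisfies the same constraints, and has Tr(A') ≤ Tr(A). -/

import Mathlib

/-!
Writing `Q = 1 - P`, cyclicity of the trace and idempotence of `P` and `Q` give
`Tr A = Tr (A P) + Tr (A Q) = Tr (P A P) + Tr (Q A Q)`, and `Q A Q` is positive semidefinite
because `Q` is Hermitian.
-/

open Matrix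

namespace Matrix

variable {n R : Type*} [Fintype n]

theorem dotProduct_mulVec_conj_of_mulVec_eq_self [CommSemiring R] {P : Matrix n n R}
    (hP : Pᵀ = P) (A : Matrix n n R) {v : n → R} (hv : P *ᵥ v = v) :
    v ⬝ᵥ (P * A * P) *ᵥ v = v ⬝ᵥ A *ᵥ v := by
  rw [← mulVec_mulVec, ← mulVec_mulVec, hv, dotProduct_mulVec, ← mulVec_transpose, hP, hv]

theorem trace_mul_mul_of_isIdempotentElem [CommSemiring R] {P : Matrix n n R}
    (hP : IsIdempotentElem P) (A : Matrix n n R) : trace (P * A * P) = trace (A * P) := by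
  rw [trace_mul_cycle, hP.eq, trace_mul_comm]

theorem trace_mul_mul_add_trace_one_sub_mul_mul [CommRing R] [DecidableEq n] {P : Matrix n n R}
    (hP : IsIdempotentElem P) (A : Matrix n n R) :
    trace (P * A * P) + trace ((1 - P) * A * (1 - P)) = trace A := by
  rw [trace_mul_mul_of_isIdempotentElem hP, trace_mul_mul_of_isIdempotentElem hP.one_sub,
    ← trace_add, ← mul_add, add_sub_cancel, mul_one]

variable [CommRing R] [PartialOrder R] [StarRing R]

theorem PosSemidef.mul_mul_of_isHermitian {A P : Matrix n n R} (hA : A.PosSemidef)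
    (hP : P.IsHermitian) : (P * A * P).PosSemidef := by
  simpa only [hP.eq] using hA.mul_mul_conjTranspose_same P

theorem PosSemidef.trace_mul_mul_le [AddLeftMono R] [DecidableEq n] {A P : Matrix n n R}
    (hA : A.PosSemidef) (hP : P.IsHermitian) (hPP : IsIdempotentElem P) :
    trace (P * A * P) ≤ trace A := by
  have hQAQ : ((1 - P) * A * (1 - P)).PosSemidef :=
    hA.mul_mul_of_isHermitian (isHermitian_one.sub hP)
  rw [← trace_mul_mul_add_trace_one_sub_mul_mul hPP A]
  exact le_add_of_nonneg_right hQAQ.trace_nonneg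

end Matrix

theorem representer_projection (n d : ℕ) (φ : Fin n → (Fin d → ℝ)) (y : Fin n → ℝ)
    (A P : Matrix (Fin d) (Fin d) ℝ) (hA : A.PosSemidef)
    (hfeas : ∀ i, y i ^ 2 ≤ φ i ⬝ᵥ A.mulVec (φ i))
    (hPidem : P * P = P) (hPsym : Pᵀ = P)
    (hPφ : ∀ i, P.mulVec (φ i) = φ i) :
    (P * A * P).PosSemidef ∧ (∀ i, y i ^ 2 ≤ φ i ⬝ᵥ (P * A * P).mulVec (φ i)) ∧
      (P * A * P).trace ≤ A.trace := by
  have hPH : P.IsHermitian := by rwa [IsHermitian, conjTranspose_eq_transpose_of_trivial]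
  refine ⟨hA.mul_mul_of_isHermitian hPH, fun i => ?_, hA.trace_mul_mul_le hPH hPidem⟩
  rw [dotProduct_mulVec_conj_of_mulVec_eq_self hPsym A (hPφ i)]
  exact hfeas i
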